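/- Let A be a normal ordered subgroupoid of an ordered groupoid G, with quotient G ⫽ A. Then: (1) if [g] ≤ [h] in G ⫽ A then [g⁻¹] ≤ [h⁻¹]; (2) if [g₁] ≤ [h₁] and [g₂] ≤ [h₂] in G ⫽ A, and the quotient compositions [g₁][g₂] and [h₁][h₂] exist (i.e. g₁⁻¹g₁ ≃_A g₂g₂⁻¹ and h₁⁻¹h₁ ≃_A h₂h₂⁻¹), then [g₁][g₂] ≤ [h₁][h₂]. -/
import Mathlib


/-!  A one-sorted algebraic formalization of ordered groupoids (Ehresmann / Lawson style).
Arrows form the carrier; composition `g * h` is "defined" when `g⁻¹ * g = h * h⁻¹`,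
and is junk otherwise.  `res f g` is the restriction `(f|g)` of axiom (OG3). -/

universe u v w u'

class OGroupoid (G : Type u) extends PartialOrder G, Mul G, Inv G where
  gpd_assoc : ∀ g h k : G, g⁻¹ * g = h * h⁻¹ → h⁻¹ * h = k * k⁻¹ →
      (g * h) * k = g * (h * k)
  gpd_inv_inv : ∀ g : G, g⁻¹⁻¹ = g
  gpd_mul_inv_rev : ∀ g h : G, g⁻¹ * g = h * h⁻¹ → (g * h)⁻¹ = h⁻¹ * g⁻¹
  gpd_dom_mul : ∀ g h : G, g⁻¹ * g = h * h⁻¹ → (g * h) * (g * h)⁻¹ = g * g⁻¹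
  gpd_ran_mul : ∀ g h : G, g⁻¹ * g = h * h⁻¹ → (g * h)⁻¹ * (g * h) = h⁻¹ * h
  gpd_id_left : ∀ g : G, g * g⁻¹ * g = g
  gpd_id_right : ∀ g : G, g * (g⁻¹ * g) = g
  ord_inv : ∀ g h : G, g ≤ h → g⁻¹ ≤ h⁻¹
  ord_mul : ∀ g₁ g₂ h₁ h₂ : G, g₁ ≤ g₂ → h₁ ≤ h₂ →
      g₁⁻¹ * g₁ = h₁ * h₁⁻¹ → g₂⁻¹ * g₂ = h₂ * h₂⁻¹ → g₁ * h₁ ≤ g₂ * h₂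
  res : G → G → G
  res_dom : ∀ f g : G, f * f⁻¹ = f → f ≤ g * g⁻¹ → res f g * (res f g)⁻¹ = f
  res_le : ∀ f g : G, f * f⁻¹ = f → f ≤ g * g⁻¹ → res f g ≤ g
  res_unique : ∀ f g k : G, f * f⁻¹ = f → f ≤ g * g⁻¹ → k * k⁻¹ = f → k ≤ g →
      k = res f g

namespace OGroupoid

variable {G : Type u} [OGroupoid G]

/-- The domain identity `g𝐝 = g * g⁻¹`. -/
def dm (g : G) : G := g * g⁻¹

/-- The range identity `g𝐫 = g⁻¹ * g`. -/
def rn (g : G) : G := g⁻¹ * g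

/-- The composition `g * h` is defined. -/
def Cmp (g h : G) : Prop := g⁻¹ * g = h * h⁻¹

/-- `e` is an identity of the groupoid. -/
def IsId (e : G) : Prop := e * e⁻¹ = e

/-- The corestriction `(g|f) = (f|g⁻¹)⁻¹` for an identity `f ≤ g𝐫`. -/
def cor (g f : G) : G := (res f g⁻¹)⁻¹

end OGroupoid

open OGroupoid

/-- An ordered functor between ordered groupoids. -/
structure OFunctor (G : Type u) (H : Type v) [OGroupoid G] [OGroupoid H] where
  toFun : G → H
  map_mul : ∀ g h : G, Cmp g h → toFun (g * h) = toFun g * toFun h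
  map_inv : ∀ g : G, toFun g⁻¹ = (toFun g)⁻¹
  map_le : ∀ g h : G, g ≤ h → toFun g ≤ toFun h

namespace OFunctor

variable {G : Type u} {H : Type v} [OGroupoid G] [OGroupoid H]

/-- Star-surjectivity: `φ` is a fibration of ordered groupoids. -/
def StarSurjective (φ : OFunctor G H) : Prop :=
  ∀ e : G, IsId e → ∀ h : H, dm h = φ.toFun e → ∃ g : G, dm g = e ∧ φ.toFun g = h

/-- Star-injectivity: `φ` is an immersion of ordered groupoids. -/
def StarInjective (φ : OFunctor G H) : Prop :=
  ∀ g k : G, dm g = dm k → φ.toFun g = φ.toFun k → g = k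

/-- A covering is a star-bijective ordered functor. -/
def IsCovering (φ : OFunctor G H) : Prop := StarSurjective φ ∧ StarInjective φ

/-- The kernel of an ordered functor. -/
def ker (φ : OFunctor G H) : Set G := {g : G | IsId (φ.toFun g)}

end OFunctor

namespace OGroupoid

variable {G : Type u} [OGroupoid G]

/-- `A` is a subgroupoid: closed under inversion and (defined) composition. -/
def IsSubgroupoid (A : Set G) : Prop :=
  (∀ a ∈ A, a⁻¹ ∈ A) ∧ ∀ a ∈ A, ∀ b ∈ A, Cmp a b → a * b ∈ A

/-- `A` is a normal ordered subgroupoid of `G`: a wide subgroupoid, closed under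
restriction, and closed under conjugation `h⁻¹ a k` whenever `h` and `k` have a
common upper bound in `G`. -/
def IsNormalOSub (A : Set G) : Prop :=
  IsSubgroupoid A ∧
  (∀ e : G, IsId e → e ∈ A) ∧
  (∀ a ∈ A, ∀ e : G, IsId e → e ≤ dm a → res e a ∈ A) ∧
  (∀ a ∈ A, ∀ h k : G, (∃ g : G, h ≤ g ∧ k ≤ g) → dm h = dm a → rn a = dm k →
      h⁻¹ * a * k ∈ A)

/-- The relation `g ≃_A h`: there are `a, b, c, d ∈ A` with `a g b` and `c h d`
defined, `a g b ≤ h` and `c h d ≤ g`. -/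
def simA (A : Set G) (g h : G) : Prop :=
  (∃ a ∈ A, ∃ b ∈ A, Cmp a g ∧ Cmp g b ∧ a * g * b ≤ h) ∧
  (∃ c ∈ A, ∃ d ∈ A, Cmp c h ∧ Cmp h d ∧ c * h * d ≤ g)

/-- The relation inducing the order on `≃_A`-classes: `[g] ≤ [k]` iff there are
`a, b ∈ A` with `a g b` defined and `a g b ≤ k`. -/
def leA (A : Set G) (g k : G) : Prop :=
  ∃ a ∈ A, ∃ b ∈ A, Cmp a g ∧ Cmp g b ∧ a * g * b ≤ k

/-- An `A`-nexus between identities `e` and `f`: a pair `(a,p)` of arrows of `A`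
with `a𝐝 ≤ e`, `a𝐫 = f`, `p𝐝 ≤ f`, `p𝐫 = e`. -/
def IsNexus (A : Set G) (a p e f : G) : Prop :=
  a ∈ A ∧ p ∈ A ∧ dm a ≤ e ∧ rn a = f ∧ dm p ≤ f ∧ rn p = e

end OGroupoid

namespace OGroupoid

section Aux

variable {G : Type u} [OGroupoid G]

lemma og_cmp_of {g h : G} (H : rn g = dm h) : Cmp g h := H

lemma og_cmp_rn {g h : G} (H : Cmp g h) : rn g = dm h := H

lemma og_cmp_inv_left (g : G) : Cmp g⁻¹ g := by
  show g⁻¹⁻¹ * g⁻¹ = g * g⁻¹; rw [gpd_inv_inv]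

lemma og_cmp_inv_right (g : G) : Cmp g g⁻¹ := by
  show g⁻¹ * g = g⁻¹ * g⁻¹⁻¹; rw [gpd_inv_inv]

lemma og_dm_inv (g : G) : dm g⁻¹ = rn g := by
  show g⁻¹ * g⁻¹⁻¹ = g⁻¹ * g; rw [gpd_inv_inv]

lemma og_rn_inv (g : G) : rn g⁻¹ = dm g := by
  show g⁻¹⁻¹ * g⁻¹ = g * g⁻¹; rw [gpd_inv_inv]

lemma og_isId_dm (g : G) : IsId (dm g) := gpd_dom_mul g g⁻¹ (og_cmp_inv_right g)

lemma og_isId_rn (g : G) : IsId (rn g) := by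
  rw [← og_dm_inv]; exact og_isId_dm g⁻¹

lemma og_mul_rn (g : G) : g * rn g = g := gpd_id_right g

lemma og_dm_mul_self (g : G) : dm g * g = g := gpd_id_left g

lemma og_dm_mul {g h : G} (H : Cmp g h) : dm (g * h) = dm g := gpd_dom_mul g h H

lemma og_rn_mul {g h : G} (H : Cmp g h) : rn (g * h) = rn h := gpd_ran_mul g h H

lemma og_mul_inv {g h : G} (H : Cmp g h) : (g * h)⁻¹ = h⁻¹ * g⁻¹ :=
  gpd_mul_inv_rev g h H

lemma og_assoc {g h k : G} (H1 : Cmp g h) (H2 : Cmp h k) :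
    (g * h) * k = g * (h * k) := gpd_assoc g h k H1 H2

lemma og_cancel_right {g h : G} (H : Cmp g h) : (g * h) * h⁻¹ = g := by
  rw [og_assoc H (og_cmp_inv_right h)]
  rw [show h * h⁻¹ = g⁻¹ * g from H.symm]
  exact gpd_id_right g

lemma og_cancel_left {g h : G} (H : Cmp g h) : g⁻¹ * (g * h) = h := by
  rw [← og_assoc (og_cmp_inv_left g) H]
  rw [show g⁻¹ * g = h * h⁻¹ from H]
  exact gpd_id_left h

lemma og_cancel_left' {g h : G} (H : Cmp g⁻¹ h) : g * (g⁻¹ * h) = h := by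
  have h1 := og_cancel_left H
  rwa [gpd_inv_inv] at h1

lemma og_ord_dm {g h : G} (H : g ≤ h) : dm g ≤ dm h :=
  ord_mul g h g⁻¹ h⁻¹ H (ord_inv g h H) (og_cmp_inv_right g) (og_cmp_inv_right h)

lemma og_ord_rn {g h : G} (H : g ≤ h) : rn g ≤ rn h :=
  ord_mul g⁻¹ h⁻¹ g h (ord_inv g h H) H (og_cmp_inv_left g) (og_cmp_inv_left h)

lemma og_mul_le {g₁ g₂ h₁ h₂ : G} (H1 : g₁ ≤ g₂) (H2 : h₁ ≤ h₂)
    (c1 : Cmp g₁ h₁) (c2 : Cmp g₂ h₂) : g₁ * h₁ ≤ g₂ * h₂ :=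
  ord_mul g₁ g₂ h₁ h₂ H1 H2 c1 c2

lemma og_id_inv {e : G} (he : IsId e) : e⁻¹ = e := by
  have h1 : (e * e⁻¹)⁻¹ = e⁻¹⁻¹ * e⁻¹ := og_mul_inv (og_cmp_inv_right e)
  rw [gpd_inv_inv] at h1
  rw [he] at h1
  exact h1

lemma og_id_mul_self {e : G} (he : IsId e) : e * e = e := by
  have h := gpd_id_left e
  rwa [he] at h

lemma og_id_rn {e : G} (he : IsId e) : rn e = e := by
  show e⁻¹ * e = e
  rw [og_id_inv he]; exact og_id_mul_self he

lemma og_cor_le {g f : G} (hf : IsId f) (hle : f ≤ rn g) : cor g f ≤ g := by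
  have h1 : f ≤ g⁻¹ * g⁻¹⁻¹ := by rw [gpd_inv_inv]; exact hle
  have h2 := res_le f g⁻¹ hf h1
  have h3 := ord_inv _ _ h2
  rwa [gpd_inv_inv] at h3

lemma og_cor_rn {g f : G} (hf : IsId f) (hle : f ≤ rn g) : rn (cor g f) = f := by
  show ((res f g⁻¹)⁻¹)⁻¹ * (res f g⁻¹)⁻¹ = f
  rw [gpd_inv_inv]
  exact res_dom f g⁻¹ hf (by rw [gpd_inv_inv]; exact hle)

lemma og_cor_unique {g f k : G} (hf : IsId f) (hle : f ≤ rn g)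
    (hk : k ≤ g) (hrk : rn k = f) : k = cor g f := by
  have h1 : k⁻¹ * k⁻¹⁻¹ = f := by rw [gpd_inv_inv]; exact hrk
  have h2 := res_unique f g⁻¹ k⁻¹ hf (by rw [gpd_inv_inv]; exact hle) h1
    (ord_inv _ _ hk)
  calc k = k⁻¹⁻¹ := (gpd_inv_inv k).symm
    _ = (res f g⁻¹)⁻¹ := by rw [h2]

variable {A : Set G}

lemma og_memA_inv (hA : IsNormalOSub A) {x : G} (hx : x ∈ A) : x⁻¹ ∈ A :=
  hA.1.1 x hx

lemma og_memA_mul (hA : IsNormalOSub A) {x y : G} (hx : x ∈ A) (hy : y ∈ A)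
    (c : Cmp x y) : x * y ∈ A := hA.1.2 x hx y hy c

lemma og_memA_id (hA : IsNormalOSub A) {e : G} (he : IsId e) : e ∈ A :=
  hA.2.1 e he

lemma og_memA_res (hA : IsNormalOSub A) {x e : G} (hx : x ∈ A) (he : IsId e)
    (hle : e ≤ dm x) : res e x ∈ A := hA.2.2.1 x hx e he hle

lemma og_memA_cor (hA : IsNormalOSub A) {x f : G} (hx : x ∈ A) (hf : IsId f)
    (hle : f ≤ rn x) : cor x f ∈ A :=
  og_memA_inv hA (og_memA_res hA (og_memA_inv hA hx) hf
    (by rw [og_dm_inv]; exact hle))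

end Aux

end OGroupoid

/-- **Statement 12.** In the quotient `G ⫽ A`: (1) if `[g] ≤ [h]` then
`[g⁻¹] ≤ [h⁻¹]`; (2) if `[g₁] ≤ [h₁]`, `[g₂] ≤ [h₂]` and the quotient compositions
`[g₁][g₂]` and `[h₁][h₂]` exist, then `[g₁][g₂] ≤ [h₁][h₂]`, where the compositions
are computed via `A`-nexuses `(a,p)` between `g₁⁻¹g₁` and `g₂g₂⁻¹` and `(b,q)`
between `h₁⁻¹h₁` and `h₂h₂⁻¹` as `[g₁][g₂] = [(g₁|a𝐝)·a·g₂]`. -/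

theorem quotient_order_compatible {G : Type u} [OGroupoid G] (A : Set G)
    (hA : IsNormalOSub A) :
    (∀ g h : G, leA A g h → leA A g⁻¹ h⁻¹) ∧
    (∀ g₁ g₂ h₁ h₂ a p b q : G,
      leA A g₁ h₁ → leA A g₂ h₂ →
      simA A (rn g₁) (dm g₂) → simA A (rn h₁) (dm h₂) →
      IsNexus A a p (rn g₁) (dm g₂) → IsNexus A b q (rn h₁) (dm h₂) →
      leA A (cor g₁ (dm a) * a * g₂) (cor h₁ (dm b) * b * h₂)) := by
  constructor
  · rintro g h ⟨a, ha, b, hb, cag, cgb, hle⟩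
    have cb'g' : Cmp b⁻¹ g⁻¹ := og_cmp_of (by
      rw [og_rn_inv, og_dm_inv]; exact (og_cmp_rn cgb).symm)
    have cg'a' : Cmp g⁻¹ a⁻¹ := og_cmp_of (by
      rw [og_rn_inv, og_dm_inv]; exact (og_cmp_rn cag).symm)
    refine ⟨b⁻¹, og_memA_inv hA hb, a⁻¹, og_memA_inv hA ha, cb'g', cg'a', ?_⟩
    have cagb : Cmp (a * g) b := og_cmp_of (by rw [og_rn_mul cag]; exact og_cmp_rn cgb)
    have e1 : ((a * g) * b)⁻¹ = (b⁻¹ * g⁻¹) * a⁻¹ := by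
      rw [og_mul_inv cagb, og_mul_inv cag, ← og_assoc cb'g' cg'a']
    have h2 := ord_inv _ _ hle
    rwa [e1] at h2
  · rintro g₁ g₂ h₁ h₂ a p b q
      ⟨a₁, ha₁, b₁, hb₁, ca₁g₁, cg₁b₁, hk₁⟩ ⟨a₂, ha₂, b₂, hb₂, ca₂g₂, cg₂b₂, hk₂⟩
      _ _ ⟨ha, hp, hda, hra, _, _⟩ ⟨hb, hq, hdb, hrb, hdq, hrq⟩
    -- abbreviations
    set g₁' := cor g₁ (dm a) with hg₁'def
    have hg₁'le : g₁' ≤ g₁ := og_cor_le (og_isId_dm a) hda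
    have hrg₁' : rn g₁' = dm a := og_cor_rn (og_isId_dm a) hda
    have cg₁'a : Cmp g₁' a := og_cmp_of hrg₁'
    have cg₁'ag₂ : Cmp (g₁' * a) g₂ := og_cmp_of (by rw [og_rn_mul cg₁'a]; exact hra)
    set u := (g₁' * a) * g₂ with hudef
    have hdu : dm u = dm g₁' := by rw [og_dm_mul cg₁'ag₂, og_dm_mul cg₁'a]
    have hru : rn u = rn g₂ := og_rn_mul cg₁'ag₂
    -- a₁' : corestriction of a₁ to dm g₁'
    have hdg₁'le : dm g₁' ≤ rn a₁ := by
      rw [og_cmp_rn ca₁g₁]; exact og_ord_dm hg₁'le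
    set a₁' := cor a₁ (dm g₁') with ha₁'def
    have ha₁' : a₁' ∈ A := og_memA_cor hA ha₁ (og_isId_dm g₁') hdg₁'le
    have ha₁'le : a₁' ≤ a₁ := og_cor_le (og_isId_dm g₁') hdg₁'le
    have hra₁' : rn a₁' = dm g₁' := og_cor_rn (og_isId_dm g₁') hdg₁'le
    -- b₁' : restriction of b₁ to dm a
    have hdale : dm a ≤ dm b₁ := by rw [← og_cmp_rn cg₁b₁]; exact hda
    set b₁' := res (dm a) b₁ with hb₁'def
    have hb₁' : b₁' ∈ A := og_memA_res hA hb₁ (og_isId_dm a) hdale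
    have hb₁'le : b₁' ≤ b₁ := res_le _ _ (og_isId_dm a) hdale
    have hdb₁' : dm b₁' = dm a := res_dom _ _ (og_isId_dm a) hdale
    -- w = a₁' g₁' b₁' ≤ h₁
    have ca₁'g₁' : Cmp a₁' g₁' := og_cmp_of hra₁'
    have ca₁'g₁'b₁' : Cmp (a₁' * g₁') b₁' := og_cmp_of (by
      rw [og_rn_mul ca₁'g₁', hrg₁', hdb₁'])
    set w := (a₁' * g₁') * b₁' with hwdef
    have ca₁g₁b₁ : Cmp (a₁ * g₁) b₁ := og_cmp_of (by
      rw [og_rn_mul ca₁g₁]; exact og_cmp_rn cg₁b₁)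
    have hwle : w ≤ h₁ :=
      le_trans (og_mul_le (og_mul_le ha₁'le hg₁'le ca₁'g₁' ca₁g₁) hb₁'le
        ca₁'g₁'b₁' ca₁g₁b₁) hk₁
    have hdw : dm w = dm a₁' := by rw [og_dm_mul ca₁'g₁'b₁', og_dm_mul ca₁'g₁']
    have hrw : rn w = rn b₁' := og_rn_mul ca₁'g₁'b₁'
    -- k₂ = a₂ g₂ b₂ ≤ h₂
    have ca₂g₂b₂ : Cmp (a₂ * g₂) b₂ := og_cmp_of (by
      rw [og_rn_mul ca₂g₂]; exact og_cmp_rn cg₂b₂)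
    set k₂ := (a₂ * g₂) * b₂ with hk₂def
    have hdk₂ : dm k₂ = dm a₂ := by rw [og_dm_mul ca₂g₂b₂, og_dm_mul ca₂g₂]
    have hrk₂ : rn k₂ = rn b₂ := og_rn_mul ca₂g₂b₂
    -- t = b₁'⁻¹ a a₂⁻¹ ∈ A
    have cb₁'inva : Cmp b₁'⁻¹ a := og_cmp_of (by rw [og_rn_inv, hdb₁'])
    have cb₁'invaa₂ : Cmp (b₁'⁻¹ * a) a₂⁻¹ := og_cmp_of (by
      rw [og_rn_mul cb₁'inva, og_dm_inv, hra, og_cmp_rn ca₂g₂])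
    set t := (b₁'⁻¹ * a) * a₂⁻¹ with htdef
    have ht : t ∈ A := og_memA_mul hA
      (og_memA_mul hA (og_memA_inv hA hb₁') ha cb₁'inva) (og_memA_inv hA ha₂)
      cb₁'invaa₂
    have hdt : dm t = rn b₁' := by
      rw [og_dm_mul cb₁'invaa₂, og_dm_mul cb₁'inva, og_dm_inv]
    have hrt : rn t = dm a₂ := by rw [og_rn_mul cb₁'invaa₂, og_rn_inv]
    -- h₁' and v
    set h₁' := cor h₁ (dm b) with hh₁'def
    have hh₁'le : h₁' ≤ h₁ := og_cor_le (og_isId_dm b) hdb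
    have hrh₁' : rn h₁' = dm b := og_cor_rn (og_isId_dm b) hdb
    have ch₁'b : Cmp h₁' b := og_cmp_of hrh₁'
    have ch₁'bh₂ : Cmp (h₁' * b) h₂ := og_cmp_of (by rw [og_rn_mul ch₁'b]; exact hrb)
    -- r₁ = cor q (rn w)
    have hrwle : rn w ≤ rn q := by rw [hrq]; exact og_ord_rn hwle
    set r₁ := cor q (rn w) with hr₁def
    have hr₁ : r₁ ∈ A := og_memA_cor hA hq (og_isId_rn w) hrwle
    have hr₁le : r₁ ≤ q := og_cor_le (og_isId_rn w) hrwle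
    have hrr₁ : rn r₁ = rn w := og_cor_rn (og_isId_rn w) hrwle
    have hdr₁le : dm r₁ ≤ dm h₂ := le_trans (og_ord_dm hr₁le) hdq
    -- b' = cor b (dm r₁)
    have hdr₁le' : dm r₁ ≤ rn b := by rw [hrb]; exact hdr₁le
    set b' := cor b (dm r₁) with hb'def
    have hb' : b' ∈ A := og_memA_cor hA hb (og_isId_dm r₁) hdr₁le'
    have hb'le : b' ≤ b := og_cor_le (og_isId_dm r₁) hdr₁le'
    have hrb' : rn b' = dm r₁ := og_cor_rn (og_isId_dm r₁) hdr₁le'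
    have hdb'le : dm b' ≤ dm b := og_ord_dm hb'le
    -- s = b' r₁ ∈ A
    have cb'r₁ : Cmp b' r₁ := og_cmp_of hrb'
    set s := b' * r₁ with hsdef
    have hs : s ∈ A := og_memA_mul hA hb' hr₁ cb'r₁
    have hds : dm s = dm b' := og_dm_mul cb'r₁
    have hrs : rn s = rn w := by rw [og_rn_mul cb'r₁, hrr₁]
    -- h₁'' = cor h₁ (dm b') ≤ h₁'
    have hdb'le' : dm b' ≤ rn h₁ := le_trans hdb'le hdb
    set h₁'' := cor h₁ (dm b') with hh₁''def
    have hh₁''le : h₁'' ≤ h₁ := og_cor_le (og_isId_dm b') hdb'le'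
    have hrh₁'' : rn h₁'' = dm b' := og_cor_rn (og_isId_dm b') hdb'le'
    have hh₁''le' : h₁'' ≤ h₁' := by
      have hdb'le'' : dm b' ≤ rn h₁' := by rw [hrh₁']; exact hdb'le
      have hx := og_cor_le (og_isId_dm b') hdb'le''
      have hxr := og_cor_rn (og_isId_dm b') hdb'le''
      have := og_cor_unique (og_isId_dm b') hdb'le' (le_trans hx hh₁'le) hxr
      rw [hh₁''def, ← this]; exact hx
    -- c = h₁'' s w⁻¹ ∈ A via normality
    have hc : (h₁'' * s) * w⁻¹ ∈ A := by
      have hconj := hA.2.2.2 s hs h₁''⁻¹ w⁻¹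
        ⟨h₁⁻¹, ord_inv _ _ hh₁''le, ord_inv _ _ hwle⟩
        (by rw [og_dm_inv, hrh₁'', hds]) (by rw [og_dm_inv, hrs])
      rwa [gpd_inv_inv] at hconj
    set c := (h₁'' * s) * w⁻¹ with hcdef
    have ch₁''s : Cmp h₁'' s := og_cmp_of (by rw [hrh₁'', hds])
    have ch₁''sw : Cmp (h₁'' * s) w⁻¹ := og_cmp_of (by
      rw [og_rn_mul ch₁''s, hrs, og_dm_inv])
    have hdc : dm c = dm h₁'' := by rw [og_dm_mul ch₁''sw, og_dm_mul ch₁''s]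
    have hrc : rn c = dm w := by rw [og_rn_mul ch₁''sw, og_rn_inv]
    -- h₂' = res (rn b') h₂
    have hrb'le : rn b' ≤ dm h₂ := by rw [hrb']; exact hdr₁le
    set h₂' := res (rn b') h₂ with hh₂'def
    have hh₂'le : h₂' ≤ h₂ := res_le _ _ (og_isId_rn b') hrb'le
    have hdh₂' : dm h₂' = rn b' := res_dom _ _ (og_isId_rn b') hrb'le
    -- α = r₁ t ∈ A
    have cr₁t : Cmp r₁ t := og_cmp_of (by rw [hrr₁, hrw, hdt])
    set al := r₁ * t with haldef
    have hal : al ∈ A := og_memA_mul hA hr₁ ht cr₁t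
    have hdal : dm al = rn b' := by rw [og_dm_mul cr₁t, hrb']
    have hral : rn al = dm k₂ := by rw [og_rn_mul cr₁t, hrt, hdk₂]
    -- k₂ ≤ h₂
    have hk₂le : k₂ ≤ h₂ := hk₂
    -- β = h₂'⁻¹ α k₂ ∈ A via normality
    have hbe : (h₂'⁻¹ * al) * k₂ ∈ A :=
      hA.2.2.2 al hal h₂' k₂ ⟨h₂, hh₂'le, hk₂le⟩ (by rw [hdh₂', hdal]) hral
    set be := (h₂'⁻¹ * al) * k₂ with hbedef
    have ch₂'al : Cmp h₂'⁻¹ al := og_cmp_of (by rw [og_rn_inv, hdh₂', hdal])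
    have ch₂'alk₂ : Cmp (h₂'⁻¹ * al) k₂ := og_cmp_of (by rw [og_rn_mul ch₂'al, hral])
    have hrbe : rn be = rn k₂ := og_rn_mul ch₂'alk₂
    -- witnesses C, D
    have ccA : Cmp c a₁' := og_cmp_of (by rw [hrc, hdw])
    set C := c * a₁' with hCdef
    have hC : C ∈ A := og_memA_mul hA hc ha₁' ccA
    have cb₂be : Cmp b₂ be⁻¹ := og_cmp_of (by
      rw [og_dm_inv, hrbe, hrk₂])
    set D := b₂ * be⁻¹ with hDdef
    have hD : D ∈ A := og_memA_mul hA hb₂ (og_memA_inv hA hbe) cb₂be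
    -- Cmp C u and Cmp u D
    have cCu : Cmp C u := og_cmp_of (by rw [og_rn_mul ccA, hra₁', hdu])
    have cuD : Cmp u D := og_cmp_of (by
      rw [hru, og_dm_mul cb₂be, og_cmp_rn cg₂b₂])
    -- key composability facts
    have ca₁'u : Cmp a₁' u := og_cmp_of (by rw [hra₁', hdu])
    have cub₂ : Cmp u b₂ := og_cmp_of (by rw [hru]; exact og_cmp_rn cg₂b₂)
    have cg₁'a' : Cmp g₁' a := cg₁'a
    -- E1 : (a₁' * u) * b₂ = (w * t) * k₂
    have cwb₁'inv : Cmp w b₁'⁻¹ := og_cmp_of (by rw [hrw, og_dm_inv])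
    have cwt : Cmp w t := og_cmp_of (by rw [hrw, hdt])
    have ca₁'g₁'a : Cmp (a₁' * g₁') a := og_cmp_of (by rw [og_rn_mul ca₁'g₁', hrg₁'])
    have cXa : Cmp ((a₁' * g₁') * a) a₂⁻¹ := og_cmp_of (by
      rw [og_rn_mul ca₁'g₁'a, og_dm_inv, hra, og_cmp_rn ca₂g₂])
    have cwb₁'a : Cmp (b₁'⁻¹ * a) a₂⁻¹ := cb₁'invaa₂
    have hwt : w * t = ((a₁' * g₁') * a) * a₂⁻¹ := by
      rw [htdef, ← og_assoc (og_cmp_of (by rw [hrw, og_dm_mul cb₁'inva, og_dm_inv]))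
        cwb₁'a]
      rw [← og_assoc cwb₁'inv cb₁'inva, hwdef, og_cancel_right ca₁'g₁'b₁']
    have ca₂g₂' : Cmp a₂ g₂ := ca₂g₂
    have ca₂invk₂ : Cmp a₂⁻¹ k₂ := og_cmp_of (by rw [og_rn_inv, hdk₂])
    have cXg₂ : Cmp ((a₁' * g₁') * a) g₂ := og_cmp_of (by
      rw [og_rn_mul ca₁'g₁'a, hra])
    have ca₂inva₂g₂ : Cmp a₂⁻¹ (a₂ * g₂) := og_cmp_of (by
      rw [og_rn_inv, og_dm_mul ca₂g₂])
    have hE1 : (a₁' * u) * b₂ = (w * t) * k₂ := by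
      have hL : a₁' * u = ((a₁' * g₁') * a) * g₂ := by
        rw [hudef, ← og_assoc (og_cmp_of (by rw [hra₁', og_dm_mul cg₁'a])) cg₁'ag₂,
          ← og_assoc ca₁'g₁' cg₁'a]
      have hmid : a₂⁻¹ * k₂ = g₂ * b₂ := by
        rw [hk₂def, ← og_assoc ca₂inva₂g₂ ca₂g₂b₂, og_cancel_left ca₂g₂]
      calc (a₁' * u) * b₂ = (((a₁' * g₁') * a) * g₂) * b₂ := by rw [hL]
        _ = ((a₁' * g₁') * a) * (g₂ * b₂) := og_assoc cXg₂ cg₂b₂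
        _ = ((a₁' * g₁') * a) * (a₂⁻¹ * k₂) := by rw [hmid]
        _ = (((a₁' * g₁') * a) * a₂⁻¹) * k₂ := (og_assoc cXa ca₂invk₂).symm
        _ = (w * t) * k₂ := by rw [← hwt]
    -- (2) c * w = h₁'' * s
    have hcw : c * w = h₁'' * s := by
      rw [hcdef, og_assoc ch₁''sw (og_cmp_inv_left w)]
      rw [show w⁻¹ * w = rn w from rfl, ← hrs, ← og_rn_mul ch₁''s, og_mul_rn]
    -- (3) s * t = b' * al
    have hst : s * t = b' * al := by
      rw [hsdef, haldef, og_assoc cb'r₁ cr₁t]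
    -- (4) k₂ * be⁻¹ = al⁻¹ * h₂'
    have calinvh₂' : Cmp al⁻¹ h₂' := og_cmp_of (by rw [og_rn_inv, hdal, hdh₂'])
    have hkbe : k₂ * be⁻¹ = al⁻¹ * h₂' := by
      have e1 : be⁻¹ = k₂⁻¹ * (al⁻¹ * h₂') := by
        rw [hbedef, og_mul_inv ch₂'alk₂, og_mul_inv ch₂'al, gpd_inv_inv]
      rw [e1]
      exact og_cancel_left' (og_cmp_of (by
        rw [og_rn_inv, og_dm_mul calinvh₂', og_dm_inv, hral]))
    -- (5) al * (al⁻¹ * h₂') = h₂'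
    have halh : al * (al⁻¹ * h₂') = h₂' :=
      og_cancel_left' (og_cmp_of (by rw [og_rn_inv, hdal, hdh₂']))
    -- main computation
    have cwtk₂ : Cmp (w * t) k₂ := og_cmp_of (by rw [og_rn_mul cwt, hrt, hdk₂])
    have ck₂be : Cmp k₂ be⁻¹ := og_cmp_of (by rw [og_dm_inv, hrbe])
    have ctZ : Cmp t (al⁻¹ * h₂') := og_cmp_of (by
      rw [og_dm_mul calinvh₂', og_dm_inv, hrt, hral, hdk₂])
    have cwY : Cmp w (t * (al⁻¹ * h₂')) := og_cmp_of (by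
      rw [og_dm_mul ctZ, hrw, hdt])
    have ccw : Cmp c w := og_cmp_of hrc
    have cst : Cmp s t := og_cmp_of (by rw [hrs, hrw, hdt])
    have ch₁''sY : Cmp h₁'' (s * (t * (al⁻¹ * h₂'))) := og_cmp_of (by
      rw [og_dm_mul (og_cmp_of (by rw [hrs, hrw, og_dm_mul ctZ, hdt])), hds, hrh₁''])
    have cb'al : Cmp b' al := og_cmp_of (by rw [hrb', hdal, hrb'])
    have calZ : Cmp al (al⁻¹ * h₂') := og_cmp_of (by
      rw [og_dm_mul calinvh₂', og_dm_inv])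
    have cb'h₂' : Cmp b' h₂' := og_cmp_of (by rw [hdh₂'])
    have hmain : (C * u) * D = (h₁'' * b') * h₂' := by
      have c_a₁'u_b₂ : Cmp (a₁' * u) b₂ := og_cmp_of (by
        rw [og_rn_mul ca₁'u, hru]; exact og_cmp_rn cg₂b₂)
      have step1 : (C * u) * D = c * (((a₁' * u) * b₂) * be⁻¹) := by
        rw [hCdef, hDdef, og_assoc ccA ca₁'u,
          og_assoc (og_cmp_of (by rw [hrc, hdw, og_dm_mul ca₁'u]))
            (og_cmp_of (by rw [og_rn_mul ca₁'u, hru, og_dm_mul cb₂be]; exact og_cmp_rn cg₂b₂)),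
          ← og_assoc c_a₁'u_b₂ cb₂be]
      have step2 : ((a₁' * u) * b₂) * be⁻¹ = (w * t) * (al⁻¹ * h₂') := by
        rw [hE1, og_assoc cwtk₂ ck₂be, hkbe]
      have step3 : (w * t) * (al⁻¹ * h₂') = w * (t * (al⁻¹ * h₂')) :=
        og_assoc cwt ctZ
      have step4 : c * (w * (t * (al⁻¹ * h₂'))) = (c * w) * (t * (al⁻¹ * h₂')) :=
        (og_assoc ccw (og_cmp_of (by rw [og_dm_mul ctZ, hrw, hdt]))).symm
      have step5 : (h₁'' * s) * (t * (al⁻¹ * h₂')) = h₁'' * (s * (t * (al⁻¹ * h₂'))) :=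
        og_assoc ch₁''s (og_cmp_of (by rw [hrs, hrw, og_dm_mul ctZ, hdt]))
      have step6 : s * (t * (al⁻¹ * h₂')) = b' * h₂' := by
        rw [← og_assoc cst ctZ, hst, og_assoc cb'al calZ, halh]
      rw [step1, step2, step3, step4, hcw, step5, step6,
        ← og_assoc (og_cmp_of (by rw [hrh₁'', ← hds]) : Cmp h₁'' b') cb'h₂']
    have hfin : (C * u) * D ≤ (cor h₁ (dm b) * b) * h₂ := by
      rw [hmain]
      have ch₁''b' : Cmp h₁'' b' := og_cmp_of hrh₁''
      have ch₁''b'h₂' : Cmp (h₁'' * b') h₂' := og_cmp_of (by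
        rw [og_rn_mul ch₁''b', ← hdh₂'])
      exact og_mul_le (og_mul_le hh₁''le' hb'le ch₁''b' ch₁'b) hh₂'le
        ch₁''b'h₂' ch₁'bh₂
    exact ⟨C, hC, D, hD, cCu, cuD, hfin⟩
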